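/- arXiv:1604.05367 — 5 statements merged into one kernel-verified Lean document; each statement's English description precedes it below -/
import Mathlib

section
/- For all x ∈ (0, π/2], one has x · cot x ≥ 1 − 4x²/π². -/
/-!
Multiplying by `sin x`, it suffices that `F(t) = t cos t - sin t + c t² sin t` with `c = 4 / π²`
is nonnegative on `[0, π/2]`. `F` vanishes at both endpoints and `F'(t) = t G(t)` with
`G(t) = (2c - 1) sin t + c t cos t`. Since `G'' = -((4c - 1) sin t + c t cos t) ≤ 0` (as `π² ≤ 16`)
and `G(0) = 0`, `G` is first nonnegative and then nonpositive, so `F` increases and then decreases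
and stays above its endpoint values.
-/

open Real Set

theorem min_le_of_hasDerivAt_mul_concaveOn {F G w : ℝ → ℝ} {a b x : ℝ}
    (hF : ∀ t ∈ Icc a b, HasDerivAt F (w t * G t) t) (hw : ∀ t ∈ Icc a b, 0 ≤ w t)
    (hG : ConcaveOn ℝ (Icc a b) G) (hGa : 0 ≤ G a) (hx : x ∈ Icc a b) :
    min (F a) (F b) ≤ F x := by
  have hFcont : ContinuousOn F (Icc a b) := fun t ht ↦ (hF t ht).continuousAt.continuousWithinAt
  have hG_nonneg : ∀ s ∈ Icc a b, ∀ t ∈ Icc a b, s ≤ t → 0 ≤ G t → 0 ≤ G s :=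
    fun s hs t ht hst hGt ↦ (le_min hGa hGt).trans
      (hG.min_le_of_mem_Icc (left_mem_Icc.2 (hs.1.trans hs.2)) ht ⟨hs.1, hst⟩)
  have hsub_left : Icc a x ⊆ Icc a b := Icc_subset_Icc_right hx.2
  have hsub_right : Icc x b ⊆ Icc a b := Icc_subset_Icc_left hx.1
  by_cases hGx : 0 ≤ G x
  · have hmono : MonotoneOn F (Icc a x) :=
      monotoneOn_of_hasDerivWithinAt_nonneg (convex_Icc a x) (hFcont.mono hsub_left)
        (fun t ht ↦ (hF t (hsub_left (interior_subset ht))).hasDerivWithinAt)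
        fun t ht ↦ have ht' := interior_subset ht
          mul_nonneg (hw t (hsub_left ht')) (hG_nonneg t (hsub_left ht') x hx ht'.2 hGx)
    exact min_le_of_left_le (hmono (left_mem_Icc.2 hx.1) (right_mem_Icc.2 hx.1) hx.1)
  · have hanti : AntitoneOn F (Icc x b) :=
      antitoneOn_of_hasDerivWithinAt_nonpos (convex_Icc x b) (hFcont.mono hsub_right)
        (fun t ht ↦ (hF t (hsub_right (interior_subset ht))).hasDerivWithinAt)
        fun t ht ↦ have ht' := interior_subset ht
          mul_nonpos_of_nonneg_of_nonpos (hw t (hsub_right ht')) <| le_of_not_ge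
            fun hGt ↦ hGx (hG_nonneg x hx t (hsub_right ht') ht'.1 hGt)
    exact min_le_of_right_le (hanti (left_mem_Icc.2 hx.2) (right_mem_Icc.2 hx.2) hx.2)

/-- `sin t * (t * cot t - (1 - c * t ^ 2))`, written without division. -/
noncomputable def cotGap (c t : ℝ) : ℝ := t * cos t - sin t + c * t ^ 2 * sin t

noncomputable def cotGapSlope (c t : ℝ) : ℝ := (2 * c - 1) * sin t + c * t * cos t

theorem hasDerivAt_cotGap (c t : ℝ) : HasDerivAt (cotGap c) (t * cotGapSlope c t) t :=
  ((((hasDerivAt_id' t).fun_mul (hasDerivAt_cos t)).fun_sub (hasDerivAt_sin t)).fun_add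
    (((hasDerivAt_pow 2 t).const_mul c).fun_mul (hasDerivAt_sin t))).congr_deriv <| by
    simp only [cotGapSlope]
    ring

theorem concaveOn_cotGapSlope {c : ℝ} (hc : 1 / 4 ≤ c) :
    ConcaveOn ℝ (Icc 0 (π / 2)) (cotGapSlope c) := by
  have hG' (t : ℝ) : HasDerivAt (cotGapSlope c) ((3 * c - 1) * cos t - c * t * sin t) t :=
    (((hasDerivAt_sin t).const_mul _).fun_add
      (((hasDerivAt_id' t).const_mul c).fun_mul (hasDerivAt_cos t))).congr_deriv (by ring)
  have hG'' (t : ℝ) : HasDerivAt (fun t ↦ (3 * c - 1) * cos t - c * t * sin t)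
      (-((4 * c - 1) * sin t + c * t * cos t)) t :=
    (((hasDerivAt_cos t).const_mul _).fun_sub
      (((hasDerivAt_id' t).const_mul c).fun_mul (hasDerivAt_sin t))).congr_deriv (by ring)
  refine concaveOn_of_hasDerivWithinAt2_nonpos (convex_Icc _ _)
    (fun t _ ↦ (hG' t).continuousAt.continuousWithinAt) (fun t _ ↦ (hG' t).hasDerivWithinAt)
    (fun t _ ↦ (hG'' t).hasDerivWithinAt) fun t ht ↦ ?_
  obtain ⟨ht0, htπ⟩ := interior_subset ht
  have hsin : 0 ≤ sin t := sin_nonneg_of_nonneg_of_le_pi ht0 (by linarith [pi_pos])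
  have hcos : 0 ≤ cos t := cos_nonneg_of_mem_Icc ⟨by linarith [pi_pos], htπ⟩
  have : 0 ≤ c * t * cos t := by positivity
  nlinarith

theorem mul_cot_ge (x : ℝ) (hx : x ∈ Set.Ioc 0 (Real.pi / 2)) :
    x * (Real.cos x / Real.sin x) ≥ 1 - 4 * x ^ 2 / Real.pi ^ 2 := by
  obtain ⟨hx0, hxπ⟩ := hx
  have hπ : 0 < π := pi_pos
  have hc : 1 / 4 ≤ 4 / π ^ 2 := by
    rw [div_le_div_iff₀ (by norm_num) (by positivity)]
    nlinarith [pi_le_four]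
  have hgap : 0 ≤ cotGap (4 / π ^ 2) x := by
    have hmin := min_le_of_hasDerivAt_mul_concaveOn (w := id)
      (fun t _ ↦ hasDerivAt_cotGap _ t) (fun t ht ↦ ht.1) (concaveOn_cotGapSlope hc)
      (by simp [cotGapSlope]) ⟨hx0.le, hxπ⟩
    have hgap_pi : cotGap (4 / π ^ 2) (π / 2) = 0 := by
      simp only [cotGap, cos_pi_div_two, sin_pi_div_two]
      field_simp
      ring
    rwa [show cotGap (4 / π ^ 2) 0 = 0 by simp [cotGap], hgap_pi, min_self] at hmin
  have hsin : 0 < sin x := sin_pos_of_pos_of_lt_pi hx0 (by linarith)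
  have hdiff : x * (cos x / sin x) - (1 - 4 * x ^ 2 / π ^ 2) = cotGap (4 / π ^ 2) x / sin x := by
    simp only [cotGap]
    field_simp
    ring
  rw [ge_iff_le, ← sub_nonneg, hdiff]
  positivity
end

section
/- For α ∈ (0, π] and real numbers t > 0, c > 0, one has (t + c)/|t·e^{iα} − c| ≤ 1/sin(α/2), with equality when t = c. -/
/-!
Writing `e^{iα} = cos α + i sin α` through the half angle gives
`|t e^{iα} - c|² = (t - c)² cos²(α/2) + (t + c)² sin²(α/2) ≥ (t + c)² sin²(α/2)`,
with equality exactly when `t = c`.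
-/

open Complex in
theorem norm_ofReal_mul_exp_sub_sq (α t c : ℝ) :
    ‖(t * exp (α * I) - c : ℂ)‖ ^ 2
      = (t - c) ^ 2 * Real.cos (α / 2) ^ 2 + (t + c) ^ 2 * Real.sin (α / 2) ^ 2 := by
  have hcos : Real.cos α = Real.cos (α / 2) ^ 2 - Real.sin (α / 2) ^ 2 := by
    rw [← Real.cos_two_mul', mul_div_cancel₀ _ two_ne_zero]
  have hsin : Real.sin α = 2 * Real.sin (α / 2) * Real.cos (α / 2) := by
    rw [← Real.sin_two_mul, mul_div_cancel₀ _ two_ne_zero]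
  rw [Complex.sq_norm, normSq_apply]
  simp only [sub_re, sub_im, re_ofReal_mul, im_ofReal_mul, exp_ofReal_mul_I_re,
    exp_ofReal_mul_I_im, ofReal_re, ofReal_im, hcos, hsin]
  linear_combination (t ^ 2 * (Real.sin (α / 2) ^ 2 + Real.cos (α / 2) ^ 2) - c ^ 2) *
    Real.sin_sq_add_cos_sq (α / 2)

theorem abs_mul_sin_half_le_norm (α t c : ℝ) :
    |(t + c) * Real.sin (α / 2)| ≤ ‖(t * Complex.exp (α * Complex.I) - c : ℂ)‖ := by
  rw [← abs_norm, ← sq_le_sq, norm_ofReal_mul_exp_sub_sq, mul_pow]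
  nlinarith [mul_nonneg (sq_nonneg (t - c)) (sq_nonneg (Real.cos (α / 2)))]

theorem div_norm_ofReal_mul_exp_sub_le {α : ℝ} (hα : 0 < Real.sin (α / 2)) (t c : ℝ) :
    (t + c) / ‖(t * Complex.exp (α * Complex.I) - c : ℂ)‖ ≤ 1 / Real.sin (α / 2) := by
  rcases (norm_nonneg (t * Complex.exp (α * Complex.I) - c : ℂ)).eq_or_lt with h0 | hpos
  · rw [← h0, div_zero]
    positivity
  rw [div_le_div_iff₀ hpos hα, one_mul]
  exact (le_abs_self _).trans (abs_mul_sin_half_le_norm α t c)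

theorem norm_ofReal_mul_exp_sub_self (α c : ℝ) :
    ‖(c * Complex.exp (α * Complex.I) - c : ℂ)‖ = 2 * |c| * |Real.sin (α / 2)| := by
  refine (sq_eq_sq₀ (norm_nonneg _) (by positivity)).mp ?_
  rw [norm_ofReal_mul_exp_sub_sq, mul_pow, mul_pow, sq_abs, sq_abs]
  ring

theorem ptolemy_ratio_sector_le_general (α t c : ℝ) (hα : α ∈ Set.Ioc 0 Real.pi)
    (hc : 0 < c) :
    (t + c) / ‖(t * Complex.exp (α * Complex.I) - c : ℂ)‖
      ≤ 1 / Real.sin (α / 2) ∧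
    (c + c) / ‖(c * Complex.exp (α * Complex.I) - c : ℂ)‖
      = 1 / Real.sin (α / 2) := by
  obtain ⟨hα0, hαπ⟩ := hα
  have hs : 0 < Real.sin (α / 2) :=
    Real.sin_pos_of_pos_of_lt_pi (by linarith) (by linarith [Real.pi_pos])
  refine ⟨div_norm_ofReal_mul_exp_sub_le hs t c, ?_⟩
  rw [norm_ofReal_mul_exp_sub_self, abs_of_pos hc, abs_of_pos hs]
  field_simp
  ring

theorem ptolemy_ratio_sector_le (α t c : ℝ) (hα : α ∈ Set.Ioc 0 Real.pi)
    (ht : 0 < t) (hc : 0 < c) :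
    (t + c) / ‖(t * Complex.exp (α * Complex.I) - c : ℂ)‖
      ≤ 1 / Real.sin (α / 2) ∧
    (c + c) / ‖(c * Complex.exp (α * Complex.I) - c : ℂ)‖
      = 1 / Real.sin (α / 2) :=
  ptolemy_ratio_sector_le_general α t c hα hc
end

section
/- For α ∈ (0, π] and c ∈ (0,1), the quantity (|c − 1| + |c·e^{iα} − 1|)/|e^{iα} − 1| is strictly greater than (1 − c)/sin(α/2). Consequently, the supremum over c ∈ (0,1) of (|c − 1| + |c·e^{iα} − 1|)/|e^{iα} − 1| is at least 1/sin(α/2). -/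
/-!
For a unit vector `z` and real `c`, `‖c z - 1‖² = (c - 1)² + c ‖z - 1‖²`; with `z = e^{iα} ≠ 1` and
`c > 0` this makes the second summand of the numerator exceed `|c - 1| ≥ 1 - c`, while the
denominator is `2 sin (α / 2)`. Letting `c → 0⁺` in this bound gives the bound on the supremum,
the set being bounded above by `2 / ‖e^{iα} - 1‖`.
-/

open Complex Filter Set Topology

section InnerProductSpace

variable {E : Type*} [NormedAddCommGroup E] [InnerProductSpace ℝ E]

theorem norm_smul_sub_sq_of_norm_eq_one {x y : E} (hx : ‖x‖ = 1) (hy : ‖y‖ = 1) (c : ℝ) :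
    ‖c • x - y‖ ^ 2 = (c - 1) ^ 2 + c * ‖x - y‖ ^ 2 := by
  rw [norm_sub_sq_real, norm_sub_sq_real, norm_smul, real_inner_smul_left, hx, hy, mul_one,
    Real.norm_eq_abs, sq_abs]
  ring

theorem abs_sub_one_lt_norm_smul_sub {x y : E} (hx : ‖x‖ = 1) (hy : ‖y‖ = 1) (hxy : x ≠ y)
    {c : ℝ} (hc : 0 < c) : |c - 1| < ‖c • x - y‖ := by
  have hgap : 0 < c * ‖x - y‖ ^ 2 := by
    have := norm_pos_iff.2 (sub_ne_zero.2 hxy)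
    positivity
  apply abs_lt_of_sq_lt_sq _ (norm_nonneg _)
  rw [norm_smul_sub_sq_of_norm_eq_one hx hy]
  linarith

end InnerProductSpace

theorem Complex.norm_exp_ofReal_mul_I_sub_one {α : ℝ} (hα : α ∈ Icc 0 (2 * Real.pi)) :
    ‖exp (α * I) - 1‖ = 2 * Real.sin (α / 2) := by
  have : 0 ≤ Real.sin (α / 2) :=
    Real.sin_nonneg_of_nonneg_of_le_pi (by linarith [hα.1]) (by linarith [hα.2])
  rw [mul_comm, norm_exp_I_mul_ofReal_sub_one, Real.norm_of_nonneg (by positivity)]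

noncomputable def ptolemyRatio (α c : ℝ) : ℝ :=
  (‖(c : ℂ) - 1‖ + ‖(c : ℂ) * exp (α * I) - 1‖) / ‖exp (α * I) - 1‖

theorem ptolemyRatio_le_two_div {c : ℝ} (hc : c ∈ Icc 0 1) (α : ℝ) :
    ptolemyRatio α c ≤ 2 / ‖exp (α * I) - 1‖ := by
  have h₁ : ‖(c : ℂ) - 1‖ = 1 - c := by
    rw [← ofReal_one, ← ofReal_sub, norm_real, Real.norm_of_nonpos (by linarith [hc.2])]
    ring
  have h₂ : ‖(c : ℂ) * exp (α * I) - 1‖ ≤ c + 1 := by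
    calc ‖(c : ℂ) * exp (α * I) - 1‖ ≤ ‖(c : ℂ) * exp (α * I)‖ + ‖(1 : ℂ)‖ := norm_sub_le _ _
      _ = c + 1 := by rw [norm_mul, norm_exp_ofReal_mul_I, norm_real, Real.norm_of_nonneg hc.1,
        norm_one, mul_one]
  unfold ptolemyRatio
  gcongr
  linarith

theorem div_sin_half_lt_ptolemyRatio {α : ℝ} (hα : α ∈ Ioo 0 (2 * Real.pi)) {c : ℝ} (hc : 0 < c) :
    (1 - c) / Real.sin (α / 2) < ptolemyRatio α c := by
  have hsin : 0 < Real.sin (α / 2) :=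
    Real.sin_pos_of_pos_of_lt_pi (by linarith [hα.1]) (by linarith [hα.2])
  have hden := norm_exp_ofReal_mul_I_sub_one (Ioo_subset_Icc_self hα)
  have hne : exp (α * I) ≠ 1 := by
    rw [← sub_ne_zero, ← norm_ne_zero_iff, hden]
    positivity
  have h₁ : ‖(c : ℂ) - 1‖ = |c - 1| := by
    rw [← ofReal_one, ← ofReal_sub, norm_real, Real.norm_eq_abs]
  have h₂ : |c - 1| < ‖(c : ℂ) * exp (α * I) - 1‖ := by
    simpa only [real_smul] using
      abs_sub_one_lt_norm_smul_sub (norm_exp_ofReal_mul_I α) norm_one hne hc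
  rw [ptolemyRatio, hden, div_lt_div_iff₀ hsin (by positivity), h₁]
  nlinarith [le_abs_self (c - 1), neg_abs_le (c - 1)]

theorem ptolemy_ratio_sector_lower (α : ℝ) (hα : α ∈ Set.Ioc 0 Real.pi) :
    (∀ c ∈ Set.Ioo (0 : ℝ) 1,
      (‖(c : ℂ) - 1‖ + ‖(c : ℂ) * Complex.exp (α * Complex.I) - 1‖) /
          ‖Complex.exp (α * Complex.I) - 1‖
        > (1 - c) / Real.sin (α / 2)) ∧
    sSup {p : ℝ | ∃ c ∈ Set.Ioo (0 : ℝ) 1,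
        p = (‖(c : ℂ) - 1‖ + ‖(c : ℂ) * Complex.exp (α * Complex.I) - 1‖) /
          ‖Complex.exp (α * Complex.I) - 1‖}
      ≥ 1 / Real.sin (α / 2) := by
  have hα' : α ∈ Ioo 0 (2 * Real.pi) := ⟨hα.1, by linarith [hα.2, Real.pi_pos]⟩
  have hlower (c) (hc : c ∈ Ioo (0 : ℝ) 1) := div_sin_half_lt_ptolemyRatio hα' hc.1
  refine ⟨hlower, ?_⟩
  have hbdd : BddAbove {p : ℝ | ∃ c ∈ Ioo (0 : ℝ) 1, p = ptolemyRatio α c} :=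
    ⟨_, by rintro _ ⟨c, hc, rfl⟩; exact ptolemyRatio_le_two_div (Ioo_subset_Icc_self hc) α⟩
  have hlim : Tendsto (fun c : ℝ ↦ (1 - c) / Real.sin (α / 2)) (𝓝[>] 0) (𝓝 (1 / Real.sin (α / 2))) :=
    tendsto_nhdsWithin_of_tendsto_nhds <|
      ((continuous_const.sub continuous_id).div_const _).tendsto' 0 _ (by simp)
  refine le_of_tendsto hlim (mem_of_superset (Ioo_mem_nhdsGT one_pos) fun c hc ↦ ?_)
  exact (hlower c hc).le.trans (le_csSup hbdd ⟨c, hc, rfl⟩)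
end

section
/- For the ellipse with semiaxes a > b > 0 given by boundary {(x,y) : (x/a)² + (y/b)² = 1}, if z = (t,0) with a − b²/a < |t| < a, then the distance from z to the boundary equals a − |t|. -/
/-!
The vertex `(±a, 0)` on the side of `t` is at distance `a - |t|`. A boundary point `(x, y)`
satisfies `a²y² = b²(a² - x²)`, and replacing `t, x` by `|t|, |x|` only decreases its squared
distance to `t`. With `s = |x| ∈ [0, a]`,
  `a² ((|t| - s)² + y² - (a - |t|)²) = (a - s) (2a²|t| - (a² - b²)(s + a))`,
and the second factor is affine in `s` and positive at `s = 0` and `s = a`, because the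
hypothesis `a - b²/a < |t|` says `a|t| > a² - b²`.
-/

open Metric

theorem Metric.infDist_eq_dist_of_mem_of_forall_le {α : Type*} [PseudoMetricSpace α]
    {s : Set α} {x p : α} (hp : p ∈ s) (h : ∀ y ∈ s, dist x p ≤ dist x y) :
    infDist x s = dist x p :=
  (infDist_le_dist_of_mem hp).antisymm ((le_infDist ⟨p, hp⟩).2 h)

def ellipse (a b : ℝ) : Set ℂ := {w | (w.re / a) ^ 2 + (w.im / b) ^ 2 = 1}

lemma ofReal_mem_ellipse {a b v : ℝ} (ha : a ≠ 0) (hv : v ^ 2 = a ^ 2) :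
    (v : ℂ) ∈ ellipse a b := by
  simp [ellipse, div_pow, hv, ha]

lemma sq_mul_im_sq_eq_of_mem_ellipse {a b : ℝ} {w : ℂ} (ha : a ≠ 0) (hb : b ≠ 0)
    (hw : w ∈ ellipse a b) : a ^ 2 * w.im ^ 2 = b ^ 2 * (a ^ 2 - w.re ^ 2) := by
  simp only [ellipse, Set.mem_ofPred_eq] at hw
  field_simp at hw
  linear_combination hw

lemma exists_sq_eq_sq_and_abs_sub_eq {a t : ℝ} (ht : |t| ≤ a) :
    ∃ v : ℝ, v ^ 2 = a ^ 2 ∧ |t - v| = a - |t| := by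
  rcases le_total 0 t with h | h
  · refine ⟨a, rfl, ?_⟩
    rw [abs_of_nonneg h] at ht ⊢
    rw [abs_of_nonpos (by linarith)]
    ring
  · refine ⟨-a, neg_sq a, ?_⟩
    rw [abs_of_nonpos h] at ht ⊢
    rw [abs_of_nonneg (by linarith)]
    ring

lemma sq_sub_abs_le_of_sq_mul_sq_eq {a b t x y : ℝ} (ha : 0 < a) (hb : b ≠ 0)
    (ht : a ^ 2 - b ^ 2 < a * |t|) (hxy : a ^ 2 * y ^ 2 = b ^ 2 * (a ^ 2 - x ^ 2)) :
    (a - |t|) ^ 2 ≤ (t - x) ^ 2 + y ^ 2 := by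
  have hx : |x| ≤ a := by
    refine abs_le_of_sq_le_sq (sub_nonneg.1 ?_) ha.le
    exact nonneg_of_mul_nonneg_right (hxy ▸ (by positivity : 0 ≤ a ^ 2 * y ^ 2)) (by positivity)
  have hfactor : 0 ≤ 2 * a ^ 2 * |t| - (a ^ 2 - b ^ 2) * (|x| + a) := by
    refine (mul_nonneg_iff_of_pos_left ha).1 ?_
    nlinarith [mul_nonneg (abs_nonneg x) (sub_nonneg.2 ht.le),
      mul_nonneg (sub_nonneg.2 hx) (abs_nonneg t)]
  have hfolded : a ^ 2 * (a - |t|) ^ 2 ≤ a ^ 2 * ((|t| - |x|) ^ 2 + y ^ 2) := by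
    nlinarith [mul_nonneg (sub_nonneg.2 hx) hfactor, sq_abs x]
  calc (a - |t|) ^ 2 ≤ (|t| - |x|) ^ 2 + y ^ 2 := le_of_mul_le_mul_left hfolded (by positivity)
    _ ≤ (t - x) ^ 2 + y ^ 2 :=
      add_le_add_left (sq_le_sq.2 (abs_abs_sub_abs_le_abs_sub t x)) _

theorem dist_to_ellipse_boundary_outer_general (a b t : ℝ)
    (ht1 : a - b ^ 2 / a < |t|) (ht2 : |t| < a) :
    Metric.infDist (t : ℂ) {w : ℂ | (w.re / a) ^ 2 + (w.im / b) ^ 2 = 1}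
      = a - |t| := by
  have ha : 0 < a := (abs_nonneg t).trans_lt ht2
  have hgap : a ^ 2 - b ^ 2 < a * |t| := by
    have := mul_lt_mul_of_pos_left ht1 ha
    rwa [mul_sub, mul_div_cancel₀ _ ha.ne', ← sq] at this
  have hb : b ≠ 0 := by
    rintro rfl
    nlinarith
  obtain ⟨v, hv, hvt⟩ := exists_sq_eq_sq_and_abs_sub_eq ht2.le
  have hdist : dist (t : ℂ) v = a - |t| := by
    rw [dist_eq_norm, ← Complex.ofReal_sub, Complex.norm_real, Real.norm_eq_abs, hvt]
  rw [← hdist]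
  refine infDist_eq_dist_of_mem_of_forall_le (ofReal_mem_ellipse ha.ne' hv) fun w hw => ?_
  rw [hdist, Complex.dist_eq_re_im, Real.le_sqrt (by linarith) (by positivity)]
  simpa using sq_sub_abs_le_of_sq_mul_sq_eq ha hb hgap (sq_mul_im_sq_eq_of_mem_ellipse ha.ne' hb hw)

theorem dist_to_ellipse_boundary_outer (a b t : ℝ) (hab : a > b) (hb : 0 < b)
    (ht1 : a - b ^ 2 / a < |t|) (ht2 : |t| < a) :
    Metric.infDist (t : ℂ) {w : ℂ | (w.re / a) ^ 2 + (w.im / b) ^ 2 = 1}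
      = a - |t| :=
  dist_to_ellipse_boundary_outer_general a b t ht1 ht2
end

section
/- For c ∈ (0,1], one has 1/sin(cπ/2) ≤ (2/π)(c + 1/c), i.e., the function f(c) = 2/(sin(cπ/2)·(c + 1/c)) satisfies f(c) ≤ 4/π, with f(c) → 4/π as c → 0⁺ and f nonincreasing on (0,1]. -/
/-!
Write `g c = sin (c π / 2) (c + 1 / c)`, so that the function of the statement is `2 / g`.
As `c → 0⁺`, `g c = sinc (c π / 2) · (π / 2) (1 + c²) → π / 2`. Moreover `g` is nondecreasing
on `(0, 1]`: with `x = c π / 2`, the sign of `g'` is that of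
`x (π² + 4x²) cos x - (π² - 4x²) sin x`, which is nonnegative on `[0, π / 2]` by Taylor bounds
on `sin` and `cos` around `0` (for `x ≤ π / 4`) and around `π / 2` (for `x ≥ π / 4`).
Hence `g ≥ π / 2` on `(0, 1]`, and all claims follow.
-/

open Real Filter Set Topology

lemma MonotoneOn.le_of_tendsto_nhdsGT {α β : Type*} [LinearOrder α] [TopologicalSpace α]
    [OrderTopology α] [DenselyOrdered α] [NoMaxOrder α] [Preorder β] [TopologicalSpace β]
    [OrderClosedTopology β] {f : α → β} {a b c : α} {l : β} (hf : MonotoneOn f (Ioc a b))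
    (hl : Tendsto f (𝓝[>] a) (𝓝 l)) (hc : c ∈ Ioc a b) : l ≤ f c :=
  le_of_tendsto hl <| by
    filter_upwards [Ioo_mem_nhdsGT hc.1] with x hx
    exact hf ⟨hx.1, hx.2.le.trans hc.2⟩ hc hx.2.le

lemma pi_sq_sub_mul_sin_le_of_le_pi_div_four {x : ℝ} (hx₀ : 0 ≤ x) (hx : x ≤ π / 4) :
    (π ^ 2 - 4 * x ^ 2) * sin x ≤ x * (π ^ 2 + 4 * x ^ 2) * cos x := by
  have hπ := pi_lt_d2
  have hx_sq : x ^ 2 ≤ π ^ 2 / 16 := by nlinarith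
  calc (π ^ 2 - 4 * x ^ 2) * sin x
      ≤ (π ^ 2 - 4 * x ^ 2) * x := by
        gcongr
        · nlinarith [pi_pos]
        · exact sin_le hx₀
    _ ≤ x * (π ^ 2 + 4 * x ^ 2) * (1 - x ^ 2 / 2) := by
        have : 0 ≤ x ^ 2 * (8 - π ^ 2 / 2 - 2 * x ^ 2) := by
          apply mul_nonneg (sq_nonneg x); nlinarith [pi_pos]
        nlinarith
    _ ≤ x * (π ^ 2 + 4 * x ^ 2) * cos x := by gcongr; exact one_sub_sq_div_two_le_cos

lemma pi_sq_sub_mul_sin_le_of_pi_div_four_le {x : ℝ} (hx : π / 4 ≤ x) (hx₂ : x ≤ π / 2) :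
    (π ^ 2 - 4 * x ^ 2) * sin x ≤ x * (π ^ 2 + 4 * x ^ 2) * cos x := by
  obtain ⟨y, hy₀, hy, rfl⟩ : ∃ y, 0 ≤ y ∧ y ≤ π / 4 ∧ x = π / 2 - y :=
    ⟨π / 2 - x, by linarith, by linarith, by ring⟩
  have hπ := pi_gt_d2
  have hπ' := pi_lt_d2
  have hx₀ : 0 ≤ π / 2 - y := by linarith
  have hy_sq : y ^ 2 ≤ π ^ 2 / 16 := by nlinarith
  have key : 2 ≤ (π - y) * (1 - y ^ 2 / 6) := by nlinarith
  calc (π ^ 2 - 4 * (π / 2 - y) ^ 2) * sin (π / 2 - y)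
      ≤ (π ^ 2 - 4 * (π / 2 - y) ^ 2) * (π / 2 - y) := by
        gcongr
        · nlinarith
        · exact sin_le hx₀
    _ = (π / 2 - y) * y * (4 * (π - y)) := by ring
    _ ≤ (π / 2 - y) * y * (2 * (π - y) ^ 2 * (1 - y ^ 2 / 6)) := by
        have hπy : 0 ≤ π - y := by linarith
        gcongr _ * ?_
        nlinarith [mul_le_mul_of_nonneg_left key hπy]
    _ ≤ (π / 2 - y) * y * ((π ^ 2 + 4 * (π / 2 - y) ^ 2) * (1 - y ^ 2 / 6)) := by
        gcongr
        · nlinarith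
        · nlinarith [sq_nonneg y]
    _ = (π / 2 - y) * (π ^ 2 + 4 * (π / 2 - y) ^ 2) * (y - y ^ 3 / 6) := by ring
    _ ≤ (π / 2 - y) * (π ^ 2 + 4 * (π / 2 - y) ^ 2) * cos (π / 2 - y) := by
        rw [cos_pi_div_two_sub]
        gcongr
        exact sin_ge_sub_cube hy₀

lemma pi_sq_sub_mul_sin_le {x : ℝ} (hx₀ : 0 ≤ x) (hx : x ≤ π / 2) :
    (π ^ 2 - 4 * x ^ 2) * sin x ≤ x * (π ^ 2 + 4 * x ^ 2) * cos x := by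
  rcases le_total x (π / 4) with h | h
  · exact pi_sq_sub_mul_sin_le_of_le_pi_div_four hx₀ h
  · exact pi_sq_sub_mul_sin_le_of_pi_div_four_le h hx

lemma hasDerivAt_sin_mul_add_one_div {c : ℝ} (hc : c ≠ 0) :
    HasDerivAt (fun c : ℝ => sin (c * π / 2) * (c + 1 / c))
      ((c * π / 2 * (π ^ 2 + 4 * (c * π / 2) ^ 2) * cos (c * π / 2) -
        (π ^ 2 - 4 * (c * π / 2) ^ 2) * sin (c * π / 2)) / (c * π) ^ 2) c := by
  have hsin := (((hasDerivAt_id' c).mul_const π).div_const 2).sin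
  have hadd := (hasDerivAt_id' c).fun_add ((hasDerivAt_const c 1).fun_div (hasDerivAt_id' c) hc)
  refine (hsin.fun_mul hadd).congr_deriv ?_
  field_simp
  ring

lemma monotoneOn_sin_mul_add_one_div :
    MonotoneOn (fun c : ℝ => sin (c * π / 2) * (c + 1 / c)) (Ioc 0 1) := by
  have hderiv (c : ℝ) (hc : c ∈ Ioc 0 1) := hasDerivAt_sin_mul_add_one_div hc.1.ne'
  refine monotoneOn_of_deriv_nonneg (convex_Ioc 0 1)
    (fun c hc => (hderiv c hc).continuousAt.continuousWithinAt)
    (fun c hc => (hderiv c (interior_subset hc)).differentiableAt.differentiableWithinAt)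
    fun c hc => ?_
  rw [interior_Ioc] at hc
  rw [(hderiv c (Ioo_subset_Ioc_self hc)).deriv]
  have hπ := pi_pos
  have key := pi_sq_sub_mul_sin_le (x := c * π / 2) (by nlinarith [hc.1]) (by nlinarith [hc.2])
  exact div_nonneg (sub_nonneg.2 key) (sq_nonneg _)

lemma tendsto_sin_mul_add_one_div :
    Tendsto (fun c : ℝ => sin (c * π / 2) * (c + 1 / c)) (𝓝[>] 0) (𝓝 (π / 2)) := by
  have hcont : Continuous (fun c : ℝ => sinc (c * π / 2) * (π / 2 * (c ^ 2 + 1))) := by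
    have := continuous_sinc
    fun_prop
  refine ((hcont.tendsto' 0 _ (by simp [sinc_zero])).mono_left nhdsWithin_le_nhds).congr' ?_
  filter_upwards [self_mem_nhdsWithin] with c (hc : 0 < c)
  rw [sinc_of_ne_zero (by positivity)]
  field_simp

theorem inv_sin_le_and_tendsto :
    (∀ c ∈ Set.Ioc (0 : ℝ) 1,
      1 / Real.sin (c * Real.pi / 2) ≤ (2 / Real.pi) * (c + 1 / c)) ∧
    (∀ c ∈ Set.Ioc (0 : ℝ) 1,
      2 / (Real.sin (c * Real.pi / 2) * (c + 1 / c)) ≤ 4 / Real.pi) ∧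
    Filter.Tendsto (fun c : ℝ => 2 / (Real.sin (c * Real.pi / 2) * (c + 1 / c)))
      (nhdsWithin 0 (Set.Ioi 0)) (nhds (4 / Real.pi)) ∧
    AntitoneOn (fun c : ℝ => 2 / (Real.sin (c * Real.pi / 2) * (c + 1 / c)))
      (Set.Ioc 0 1) := by
  have hg_ge : ∀ c ∈ Ioc (0 : ℝ) 1, π / 2 ≤ sin (c * π / 2) * (c + 1 / c) := fun c hc =>
    monotoneOn_sin_mul_add_one_div.le_of_tendsto_nhdsGT tendsto_sin_mul_add_one_div hc
  have hg_pos : ∀ c ∈ Ioc (0 : ℝ) 1, 0 < sin (c * π / 2) * (c + 1 / c) := fun c hc =>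
    (by positivity : (0 : ℝ) < π / 2).trans_le (hg_ge c hc)
  refine ⟨fun c hc => ?_, fun c hc => ?_, ?_, ?_⟩
  · have hsin : 0 < sin (c * π / 2) := pos_of_mul_pos_left (hg_pos c hc) (by positivity [hc.1])
    rw [div_le_iff₀ hsin]
    calc (1 : ℝ) = 2 / π * (π / 2) := by field_simp
      _ ≤ 2 / π * (sin (c * π / 2) * (c + 1 / c)) := by gcongr; exact hg_ge c hc
      _ = _ := by ring
  · calc 2 / (sin (c * π / 2) * (c + 1 / c)) ≤ 2 / (π / 2) :=
          div_le_div_of_nonneg_left zero_le_two (by positivity) (hg_ge c hc)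
      _ = 4 / π := by ring
  · rw [show 4 / π = 2 / (π / 2) by ring]
    exact tendsto_const_nhds.div tendsto_sin_mul_add_one_div (by positivity)
  · exact fun a ha b hb hab => div_le_div_of_nonneg_left zero_le_two (hg_pos a ha)
      (monotoneOn_sin_mul_add_one_div ha hb hab)
end
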